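/- Euler (singular value) decomposition of symplectic matrices: every S ∈ Sp(2N,ℝ) can be written as S = U₁ · D · U₂ where U₁ and U₂ are elements of Sp(2N,ℝ) ∩ O(2N) and D = diag(d₁, 1/d₁, d₂, 1/d₂, …, d_N, 1/d_N) is a diagonal matrix with d_i > 0 for all i = 1,…,N. -/

import Mathlib

open Matrix Polynomial
open ComplexOrder

noncomputable section

/-- The standard symplectic form matrix: block diagonal with 2×2 blocks [[0,1],[-1,0]]. -/
def symplForm (n : ℕ) : Matrix (Fin n) (Fin n) ℝ :=
  Matrix.of fun i j =>
    if (i : ℕ) + 1 = (j : ℕ) ∧ (i : ℕ) % 2 = 0 then 1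
    else if (j : ℕ) + 1 = (i : ℕ) ∧ (j : ℕ) % 2 = 0 then -1 else 0

/-- Membership in the real symplectic group: `S σ Sᵀ = σ`. -/
def IsSymplectic {n : ℕ} (S : Matrix (Fin n) (Fin n) ℝ) : Prop :=
  S * symplForm n * Sᵀ = symplForm n

/-- The Williamson diagonal matrix `diag(a₁,a₁,…,a_N,a_N)`. -/
def WDiag {N : ℕ} (a : Fin N → ℝ) : Matrix (Fin (2 * N)) (Fin (2 * N)) ℝ :=
  Matrix.diagonal fun i => a ⟨(i : ℕ) / 2, by have := i.isLt; omega⟩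

/-- A covariance matrix: real symmetric with `γ + iσ` positive semidefinite. -/
def IsCovMatrix {n : ℕ} (γ : Matrix (Fin n) (Fin n) ℝ) : Prop :=
  γ.IsSymm ∧
    (γ.map (Complex.ofReal) + Complex.I • (symplForm n).map Complex.ofReal).PosSemidef

/-- The block-diagonal direct sum of two square matrices. -/
def dirSum {m n : ℕ} (A : Matrix (Fin m) (Fin m) ℝ) (B : Matrix (Fin n) (Fin n) ℝ) :
    Matrix (Fin (m + n)) (Fin (m + n)) ℝ :=
  Matrix.reindex finSumFinEquiv finSumFinEquiv (Matrix.fromBlocks A 0 0 B)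

/-- Separability of a covariance matrix with respect to the split `A|B`. -/
def IsSepCov (nA nB : ℕ) (γ : Matrix (Fin (nA + nB)) (Fin (nA + nB)) ℝ) : Prop :=
  ∃ (γA : Matrix (Fin nA) (Fin nA) ℝ) (γB : Matrix (Fin nB) (Fin nB) ℝ),
    IsCovMatrix γA ∧ IsCovMatrix γB ∧ (γ - dirSum γA γB).PosSemidef

/-- The diagonal matrix `diag(d₁, 1/d₁, …, d_N, 1/d_N)`. -/
def eulerDiag {N : ℕ} (d : Fin N → ℝ) : Matrix (Fin (2 * N)) (Fin (2 * N)) ℝ :=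
  Matrix.diagonal fun i =>
    if (i : ℕ) % 2 = 0 then d ⟨(i : ℕ) / 2, by have := i.isLt; omega⟩
    else (d ⟨(i : ℕ) / 2, by have := i.isLt; omega⟩)⁻¹

lemma symplForm_apply (n : ℕ) (i j : Fin n) :
    symplForm n i j =
      if (i : ℕ) + 1 = (j : ℕ) ∧ (i : ℕ) % 2 = 0 then 1
      else if (j : ℕ) + 1 = (i : ℕ) ∧ (j : ℕ) % 2 = 0 then -1 else 0 := rfl

lemma symplForm_transpose (n : ℕ) : (symplForm n)ᵀ = -symplForm n := by
  ext i j
  simp only [transpose_apply, Matrix.neg_apply, symplForm_apply]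
  split_ifs with h1 h2 h3 h4 h5 h6 h7 h8 h9 h10 h11 h12 h13 h14 h15 h16 h17 h18 h19 h20 h21 h22 h23 h24 <;> first | (exfalso; omega) | norm_num

lemma symplForm_mul_self {n : ℕ} (hn : n % 2 = 0) :
    symplForm n * symplForm n = -1 := by
  ext i j
  rw [Matrix.mul_apply]
  rcases Nat.even_or_odd (i : ℕ) with hi | hi
  · have hi2 : (i : ℕ) % 2 = 0 := Nat.even_iff.mp hi
    have hlt : (i : ℕ) + 1 < n := by omega
    rw [Finset.sum_eq_single (⟨(i : ℕ) + 1, hlt⟩ : Fin n)]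
    · have hc : ((⟨(i : ℕ) + 1, hlt⟩ : Fin n) : ℕ) = (i : ℕ) + 1 := rfl
      simp only [symplForm_apply, hc, Matrix.neg_apply, one_apply, Fin.ext_iff, true_and]
      split_ifs with h1 h2 h3 h4 h5 h6 h7 h8 h9 h10 h11 h12 h13 h14 h15 h16 h17 h18 h19 h20 h21 h22 h23 h24 <;> first | (exfalso; omega) | norm_num
    · intro k _ hk
      have hk' : (k : ℕ) ≠ (i : ℕ) + 1 := fun he => hk (Fin.ext he)
      simp only [symplForm_apply]
      rw [if_neg (by omega), if_neg (by omega)]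
      exact zero_mul _
    · intro h; exact absurd (Finset.mem_univ _) h
  · have hi2 : (i : ℕ) % 2 = 1 := Nat.odd_iff.mp hi
    have hlt : (i : ℕ) - 1 < n := by omega
    rw [Finset.sum_eq_single (⟨(i : ℕ) - 1, hlt⟩ : Fin n)]
    · have hc : ((⟨(i : ℕ) - 1, hlt⟩ : Fin n) : ℕ) = (i : ℕ) - 1 := rfl
      simp only [symplForm_apply, hc, Matrix.neg_apply, one_apply, Fin.ext_iff, true_and]
      split_ifs with h1 h2 h3 h4 h5 h6 h7 h8 h9 h10 h11 h12 h13 h14 h15 h16 h17 h18 h19 h20 h21 h22 h23 h24 <;> first | (exfalso; omega) | norm_num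
    · intro k _ hk
      have hk' : (k : ℕ) ≠ (i : ℕ) - 1 := fun he => hk (Fin.ext he)
      simp only [symplForm_apply]
      rw [if_neg (by omega), if_neg (by omega)]
      exact zero_mul _
    · intro h; exact absurd (Finset.mem_univ _) h

lemma symplForm_mul_transpose {n : ℕ} (hn : n % 2 = 0) :
    symplForm n * (symplForm n)ᵀ = 1 := by
  rw [symplForm_transpose, Matrix.mul_neg, symplForm_mul_self hn, neg_neg]

lemma transpose_mul_symplForm {n : ℕ} (hn : n % 2 = 0) :
    (symplForm n)ᵀ * symplForm n = 1 := by
  rw [symplForm_transpose, Matrix.neg_mul, symplForm_mul_self hn, neg_neg]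

lemma IsSymplectic.mul {n : ℕ} {A B : Matrix (Fin n) (Fin n) ℝ}
    (hA : IsSymplectic A) (hB : IsSymplectic B) : IsSymplectic (A * B) := by
  unfold IsSymplectic at *
  rw [Matrix.transpose_mul, ← Matrix.mul_assoc]
  have h : A * B * symplForm n * Bᵀ = A * (B * symplForm n * Bᵀ) := by
    simp [Matrix.mul_assoc]
  rw [h, hB, hA]

lemma IsSymplectic.transpose {n : ℕ} {A : Matrix (Fin n) (Fin n) ℝ}
    (hn : n % 2 = 0) (hA : IsSymplectic A) : IsSymplectic Aᵀ := by
  unfold IsSymplectic at *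
  rw [Matrix.transpose_transpose]
  -- A * (symplForm n * Aᵀ * (symplForm n)ᵀ) = 1
  have h1 : A * (symplForm n * Aᵀ * (symplForm n)ᵀ) = 1 := by
    rw [← Matrix.mul_assoc, ← Matrix.mul_assoc, hA, symplForm_mul_transpose hn]
  have h2 : (symplForm n * Aᵀ * (symplForm n)ᵀ) * A = 1 := by
    rw [mul_eq_one_comm] at h1; exact h1
  have h3 : (symplForm n)ᵀ * (symplForm n * (Aᵀ * ((symplForm n)ᵀ * A))) = (symplForm n)ᵀ := by
    calc (symplForm n)ᵀ * (symplForm n * (Aᵀ * ((symplForm n)ᵀ * A)))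
        = (symplForm n)ᵀ * (symplForm n * Aᵀ * (symplForm n)ᵀ * A) := by
          rw [Matrix.mul_assoc (symplForm n * Aᵀ), Matrix.mul_assoc (symplForm n)]
      _ = (symplForm n)ᵀ := by rw [h2, Matrix.mul_one]
  rw [← Matrix.mul_assoc, ← Matrix.mul_assoc, transpose_mul_symplForm hn, Matrix.one_mul,
    ← Matrix.mul_assoc] at h3
  -- h3 : Aᵀ * (symplForm n)ᵀ * A = (symplForm n)ᵀ
  rw [symplForm_transpose] at h3
  have := congrArg Neg.neg h3
  simpa [Matrix.mul_neg, Matrix.neg_mul] using this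

/-- mulVec as a linear map on Euclidean space. -/
def mvE {n : ℕ} (A : Matrix (Fin n) (Fin n) ℝ) :
    EuclideanSpace ℝ (Fin n) →ₗ[ℝ] EuclideanSpace ℝ (Fin n) where
  toFun x := WithLp.toLp 2 (A *ᵥ x)
  map_add' x y := by ext i; simp [Matrix.mulVec_add]
  map_smul' c x := by ext i; simp [Matrix.mulVec_smul]

lemma mvE_apply {n : ℕ} (A : Matrix (Fin n) (Fin n) ℝ) (x : EuclideanSpace ℝ (Fin n)) :
    mvE A x = A *ᵥ x := rfl

lemma inner_eq_dot {n : ℕ} (x y : EuclideanSpace ℝ (Fin n)) :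
    (inner ℝ x y : ℝ) = (x : Fin n → ℝ) ⬝ᵥ (y : Fin n → ℝ) := by
  simp [PiLp.inner_apply, dotProduct, RCLike.inner_apply, mul_comm]

lemma mem_orthogonal_span_pair {n : ℕ} {a b x : EuclideanSpace ℝ (Fin n)}
    (ha : (inner ℝ a x : ℝ) = 0) (hb : (inner ℝ b x : ℝ) = 0) :
    x ∈ (Submodule.span ℝ {a, b})ᗮ := by
  rw [Submodule.mem_orthogonal]
  intro u hu
  induction hu using Submodule.span_induction with
  | mem y hy =>
    rcases hy with rfl | hy
    · exact ha
    · rw [Set.mem_singleton_iff] at hy; subst hy; exact hb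
  | zero => simp
  | add y z _ _ hy hz => rw [inner_add_left, hy, hz, add_zero]
  | smul r y _ hy => rw [real_inner_smul_left, hy, mul_zero]

lemma euler_family {n : ℕ} (p j : EuclideanSpace ℝ (Fin n) →ₗ[ℝ] EuclideanSpace ℝ (Fin n))
    (hp : p.IsSymmetric)
    (hpos : ∀ x : EuclideanSpace ℝ (Fin n), x ≠ 0 → (0:ℝ) < inner ℝ x (p x))
    (hj : ∀ x y : EuclideanSpace ℝ (Fin n), (inner ℝ (j x) y : ℝ) = -inner ℝ x (j y))
    (hjj : ∀ x, j (j x) = -x)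
    (hpjp : ∀ x, p (j (p x)) = j x) :
    ∀ (k : ℕ) (W : Submodule ℝ (EuclideanSpace ℝ (Fin n))),
      (∀ x ∈ W, p x ∈ W) → (∀ x ∈ W, j x ∈ W) → Module.finrank ℝ W = 2 * k →
      ∃ (v : Fin k → EuclideanSpace ℝ (Fin n)) (lam : Fin k → ℝ),
        (∀ i, v i ∈ W) ∧ (∀ i, 0 < lam i) ∧ (∀ i, p (v i) = lam i • v i) ∧
        (∀ i i', (inner ℝ (v i) (v i') : ℝ) = if i = i' then 1 else 0) ∧
        (∀ i i', (inner ℝ (v i) (j (v i')) : ℝ) = 0) := by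
  intro k
  induction k with
  | zero =>
    intro W _ _ _
    exact ⟨Fin.elim0, Fin.elim0, fun i => i.elim0, fun i => i.elim0, fun i => i.elim0,
      fun i => i.elim0, fun i => i.elim0⟩
  | succ k IH =>
    intro W hWp hWj hrk
    haveI : Nontrivial W := by
      apply Module.finrank_pos_iff (R := ℝ).mp
      omega
    let T : W →ₗ[ℝ] W := p.restrict hWp
    have hTcoe : ∀ x : W, (T x : EuclideanSpace ℝ (Fin n)) = p x :=
      fun x => LinearMap.restrict_coe_apply p hWp x
    have hT : T.IsSymmetric := by
      intro x y
      rw [Submodule.coe_inner, Submodule.coe_inner, hTcoe, hTcoe]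
      exact hp (x : EuclideanSpace ℝ (Fin n)) y
    obtain ⟨u, hu⟩ := Module.End.HasEigenvalue.exists_hasEigenvector
      hT.hasEigenvalue_iSup_of_finiteDimensional
    set μ : ℝ := (⨆ x : { x : W // x ≠ 0 }, RCLike.re (inner ℝ (T x) (x : W) : ℝ) / ‖(x : W)‖ ^ 2 : ℝ)
      with hμdef
    have hv₀W : (u : EuclideanSpace ℝ (Fin n)) ∈ W := u.2
    set v₀ : EuclideanSpace ℝ (Fin n) := (u : EuclideanSpace ℝ (Fin n)) with hv₀def
    have hv₀ne : v₀ ≠ 0 := by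
      simpa [hv₀def] using hu.2
    have heig : p v₀ = μ • v₀ := by
      have h1 := hu.apply_eq_smul
      have h2 := congrArg (Subtype.val) h1
      rw [hTcoe] at h2
      simpa using h2
    have hμpos : 0 < μ := by
      have h1 := hpos v₀ hv₀ne
      rw [heig, real_inner_smul_right] at h1
      have h2 : 0 < (inner ℝ v₀ v₀ : ℝ) := by
        rw [real_inner_self_eq_norm_mul_norm]
        have := norm_pos_iff.mpr hv₀ne
        positivity
      nlinarith
    set c : ℝ := ‖v₀‖ with hcdef
    have hc : 0 < c := norm_pos_iff.mpr hv₀ne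
    set v₁ : EuclideanSpace ℝ (Fin n) := c⁻¹ • v₀ with hv₁def
    have hv₁W : v₁ ∈ W := W.smul_mem _ hv₀W
    have hv₁unit : (inner ℝ v₁ v₁ : ℝ) = 1 := by
      rw [hv₁def, real_inner_smul_left, real_inner_smul_right,
        real_inner_self_eq_norm_mul_norm, ← hcdef]
      field_simp
    have heig1 : p v₁ = μ • v₁ := by
      rw [hv₁def, LinearMap.map_smul, heig, smul_smul, smul_smul, mul_comm]
    have hjeig1 : p (j v₁) = μ⁻¹ • j v₁ := by
      have h0 := hpjp v₁
      rw [heig1, LinearMap.map_smul, LinearMap.map_smul] at h0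
      have h1 : p (j v₁) = μ⁻¹ • (μ • p (j v₁)) := by
        rw [smul_smul, inv_mul_cancel₀ hμpos.ne', one_smul]
      rw [h1, h0]
    have hjv₁W : j v₁ ∈ W := hWj _ hv₁W
    have hv₁jv₁ : (inner ℝ v₁ (j v₁) : ℝ) = 0 := by
      have h0 := hj v₁ v₁
      have h1 : (inner ℝ (j v₁) v₁ : ℝ) = inner ℝ v₁ (j v₁) := real_inner_comm _ _
      linarith
    have hjvv : (inner ℝ (j v₁) v₁ : ℝ) = 0 := by
      rw [real_inner_comm]; exact hv₁jv₁
    have hnormj : (inner ℝ (j v₁) (j v₁) : ℝ) = 1 := by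
      rw [hj v₁ (j v₁), hjj, inner_neg_right, hv₁unit, neg_neg]
    set S₂ : Submodule ℝ (EuclideanSpace ℝ (Fin n)) := Submodule.span ℝ {v₁, j v₁} with hS₂def
    have hS₂W : S₂ ≤ W := by
      rw [Submodule.span_le]
      rintro x (rfl | hx)
      · exact hv₁W
      · rw [Set.mem_singleton_iff] at hx; subst hx; exact hjv₁W
    have hv₁S₂ : v₁ ∈ S₂ := Submodule.subset_span (by left; rfl)
    have hjv₁S₂ : j v₁ ∈ S₂ := Submodule.subset_span (by right; rfl)
    have hON : Orthonormal ℝ (![v₁, j v₁]) := by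
      rw [orthonormal_iff_ite]
      intro a b
      fin_cases a <;> fin_cases b <;>
        simp [hv₁unit, hnormj, hv₁jv₁, hjvv,
          (by rw [norm_eq_sqrt_real_inner, hnormj, Real.sqrt_one] : ‖j v₁‖ = 1),
          (by rw [norm_eq_sqrt_real_inner, hv₁unit, Real.sqrt_one] : ‖v₁‖ = 1)]
    have hrange : Set.range ![v₁, j v₁] = {v₁, j v₁} := by
      ext x
      constructor
      · rintro ⟨i, rfl⟩
        fin_cases i
        · left; rfl
        · right; rfl
      · rintro (rfl | hx)
        · exact ⟨0, rfl⟩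
        · rw [Set.mem_singleton_iff] at hx; subst hx; exact ⟨1, rfl⟩
    have hrk2 : Module.finrank ℝ S₂ = 2 := by
      have h1 := finrank_span_eq_card hON.linearIndependent
      rw [hrange] at h1
      simpa using h1
    set W' : Submodule ℝ (EuclideanSpace ℝ (Fin n)) := S₂ᗮ ⊓ W with hW'def
    have hW'W : W' ≤ W := inf_le_right
    have hW'S : W' ≤ S₂ᗮ := inf_le_left
    have horthc : ∀ x ∈ W', ∀ u' ∈ S₂, (inner ℝ u' x : ℝ) = 0 := by
      intro x hx u' hu'
      exact (Submodule.mem_orthogonal S₂ x).mp (hW'S hx) u' hu'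
    have hW'p : ∀ x ∈ W', p x ∈ W' := by
      intro x hx
      refine Submodule.mem_inf.mpr ⟨mem_orthogonal_span_pair ?_ ?_, hWp x (hW'W hx)⟩
      · rw [← hp v₁ x, heig1, real_inner_smul_left, horthc x hx v₁ hv₁S₂, mul_zero]
      · rw [← hp (j v₁) x, hjeig1, real_inner_smul_left, horthc x hx _ hjv₁S₂, mul_zero]
    have hW'j : ∀ x ∈ W', j x ∈ W' := by
      intro x hx
      refine Submodule.mem_inf.mpr ⟨mem_orthogonal_span_pair ?_ ?_, hWj x (hW'W hx)⟩
      · have e1 : (inner ℝ v₁ (j x) : ℝ) = inner ℝ (j x) v₁ := real_inner_comm _ _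
        have e2 : (inner ℝ (j x) v₁ : ℝ) = -inner ℝ x (j v₁) := hj x v₁
        have e3 : (inner ℝ x (j v₁) : ℝ) = inner ℝ (j v₁) x := real_inner_comm _ _
        rw [e1, e2, e3, horthc x hx _ hjv₁S₂, neg_zero]
      · have e1 : (inner ℝ (j v₁) (j x) : ℝ) = -inner ℝ v₁ (j (j x)) := hj v₁ (j x)
        rw [e1, hjj, inner_neg_right, horthc x hx _ hv₁S₂, neg_zero, neg_zero]
    have hrkW' : Module.finrank ℝ W' = 2 * k := by
      have hsup : S₂ ⊔ (S₂ᗮ ⊓ W) = W := Submodule.sup_orthogonal_inf_of_hasOrthogonalProjection hS₂W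
      have hdisj : S₂ ⊓ (S₂ᗮ ⊓ W) = ⊥ := by
        rw [eq_bot_iff]
        intro x hx
        have h1 : x ∈ S₂ ⊓ S₂ᗮ := ⟨hx.1, hx.2.1⟩
        rw [(Submodule.orthogonal_disjoint S₂).eq_bot] at h1
        exact h1
      have h2 := Submodule.finrank_sup_add_finrank_inf_eq S₂ (S₂ᗮ ⊓ W)
      rw [hsup, hdisj] at h2
      simp only [finrank_bot, add_zero] at h2
      rw [hrk, hrk2] at h2
      rw [hW'def]
      omega
    obtain ⟨v', lam', hmem', hpos', heig', hinner', hinnerj'⟩ := IH W' hW'p hW'j hrkW'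
    refine ⟨Fin.cons v₁ v', Fin.cons μ lam', ?_, ?_, ?_, ?_, ?_⟩
    · intro i
      refine Fin.cases ?_ ?_ i
      · exact hv₁W
      · intro i'; exact hW'W (hmem' i')
    · intro i
      refine Fin.cases ?_ ?_ i
      · exact hμpos
      · intro i'; exact hpos' i'
    · intro i
      refine Fin.cases ?_ ?_ i
      · simpa using heig1
      · intro i'; simpa using heig' i'
    · intro a b
      refine Fin.cases ?_ ?_ a <;> [skip; intro a'] <;> refine Fin.cases ?_ ?_ b
      · simpa using hv₁unit
      · intro b'
        rw [if_neg (fun h => (Fin.succ_ne_zero b') h.symm)]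
        simpa using horthc (v' b') (hmem' b') v₁ hv₁S₂
      · rw [if_neg (Fin.succ_ne_zero a')]
        have h0 := horthc (v' a') (hmem' a') v₁ hv₁S₂
        rw [real_inner_comm] at h0
        simpa using h0
      · intro b'
        have h0 := hinner' a' b'
        simp only [Fin.cons_succ]
        rw [h0]
        by_cases hab : a' = b'
        · subst hab; simp
        · rw [if_neg hab, if_neg (fun h => hab (Fin.succ_inj.mp h))]
    · intro a b
      refine Fin.cases ?_ ?_ a <;> [skip; intro a'] <;> refine Fin.cases ?_ ?_ b
      · simpa using hv₁jv₁
      · intro b'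
        have hjW' : j (v' b') ∈ W' := hW'j _ (hmem' b')
        simpa using horthc _ hjW' v₁ hv₁S₂
      · have h0 := horthc (v' a') (hmem' a') _ hjv₁S₂
        rw [real_inner_comm] at h0
        simpa using h0
      · intro b'; simpa using hinnerj' a' b'

lemma eulerDiag_mul {N : ℕ} (d e : Fin N → ℝ) :
    eulerDiag d * eulerDiag e = eulerDiag (fun i => d i * e i) := by
  unfold eulerDiag
  rw [Matrix.diagonal_mul_diagonal]
  exact congrArg Matrix.diagonal (funext fun i => by
    split_ifs
    · rfl
    · exact (mul_inv _ _).symm)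

lemma eulerDiag_one {N : ℕ} : eulerDiag (fun _ : Fin N => (1:ℝ)) = 1 := by
  unfold eulerDiag
  have : (fun i : Fin (2*N) => if (i : ℕ) % 2 = 0 then (1:ℝ) else (1:ℝ)⁻¹) = fun _ => 1 := by
    funext i; split_ifs <;> simp
  rw [this, Matrix.diagonal_one]

lemma eulerDiag_transpose {N : ℕ} (d : Fin N → ℝ) : (eulerDiag d)ᵀ = eulerDiag d :=
  Matrix.diagonal_transpose _

lemma eulerDiag_symplectic {N : ℕ} (d : Fin N → ℝ) (hd : ∀ i, d i ≠ 0) :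
    IsSymplectic (eulerDiag d) := by
  unfold IsSymplectic
  rw [eulerDiag_transpose]
  ext i j
  unfold eulerDiag
  rw [Matrix.mul_diagonal, Matrix.diagonal_mul]
  by_cases h1 : (i:ℕ)+1 = (j:ℕ) ∧ (i:ℕ)%2 = 0
  · have hfin : ∀ (h : (j:ℕ)/2 < N) (h' : (i:ℕ)/2 < N), d ⟨(j:ℕ)/2, h⟩ = d ⟨(i:ℕ)/2, h'⟩ :=
      fun h h' => congrArg d (Fin.ext (show (j:ℕ)/2 = (i:ℕ)/2 by omega))
    rw [symplForm_apply, if_pos h1, if_pos h1.2, if_neg (by omega : ¬(j:ℕ)%2 = 0), hfin]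
    rw [mul_one, mul_inv_cancel₀ (hd _)]
    exact (by have := i.isLt; omega)
  · by_cases h2 : (j:ℕ)+1 = (i:ℕ) ∧ (j:ℕ)%2 = 0
    · have hfin : ∀ (h : (i:ℕ)/2 < N) (h' : (j:ℕ)/2 < N), d ⟨(i:ℕ)/2, h⟩ = d ⟨(j:ℕ)/2, h'⟩ :=
        fun h h' => congrArg d (Fin.ext (show (i:ℕ)/2 = (j:ℕ)/2 by omega))
      rw [symplForm_apply, if_neg h1, if_pos h2, if_neg (by omega : ¬(i:ℕ)%2 = 0), if_pos h2.2,
        hfin]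
      rw [mul_neg, mul_one, neg_mul, inv_mul_cancel₀ (hd _)]
      exact (by have := j.isLt; omega)
    · rw [symplForm_apply, if_neg h1, if_neg h2, mul_zero, zero_mul]


/-- Euler (singular value) decomposition of symplectic matrices. -/
theorem symplectic_euler_decomposition (N : ℕ) (hN : 1 ≤ N)
    (S : Matrix (Fin (2 * N)) (Fin (2 * N)) ℝ) (hS : IsSymplectic S) :
    ∃ (U₁ U₂ : Matrix (Fin (2 * N)) (Fin (2 * N)) ℝ) (d : Fin N → ℝ),
      IsSymplectic U₁ ∧ U₁ * U₁ᵀ = 1 ∧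
      IsSymplectic U₂ ∧ U₂ * U₂ᵀ = 1 ∧
      (∀ i, 0 < d i) ∧
      S = U₁ * eulerDiag d * U₂ := by
  have hn : (2 * N) % 2 = 0 := by omega
  set Jm : Matrix (Fin (2*N)) (Fin (2*N)) ℝ := (symplForm (2*N))ᵀ with hJmdef
  have hJmneg : Jm = -symplForm (2*N) := symplForm_transpose _
  have hσJ : symplForm (2*N) = -Jm := by rw [hJmneg, neg_neg]
  have hSt : IsSymplectic Sᵀ := hS.transpose hn
  set P := S * Sᵀ with hPdef
  have hPsympl : IsSymplectic P := hS.mul hSt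
  have hPsymm : Pᵀ = P := by rw [hPdef, Matrix.transpose_mul, Matrix.transpose_transpose]
  have hPJP : P * Jm * P = Jm := by
    have h0 : P * symplForm (2*N) * P = symplForm (2*N) := by
      have h := hPsympl
      unfold IsSymplectic at h
      rwa [hPsymm] at h
    rw [hJmneg, Matrix.mul_neg, Matrix.neg_mul, h0]
  -- dot product facts
  have hdotP : ∀ x y : Fin (2*N) → ℝ, (P *ᵥ x) ⬝ᵥ y = x ⬝ᵥ (P *ᵥ y) := by
    intro x y
    rw [Matrix.dotProduct_mulVec]
    conv_rhs => rw [← hPsymm, Matrix.vecMul_transpose]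
  have hdotJ : ∀ x y : Fin (2*N) → ℝ, (Jm *ᵥ x) ⬝ᵥ y = -(x ⬝ᵥ (Jm *ᵥ y)) := by
    intro x y
    rw [Matrix.dotProduct_mulVec]
    have h2 : x ᵥ* Jm = -(Jm *ᵥ x) := by
      conv_lhs => rw [hJmdef, Matrix.vecMul_transpose]
      rw [hσJ, Matrix.neg_mulVec]
    rw [h2, neg_dotProduct, neg_neg]
  have hJJ : Jm * Jm = -1 := by
    rw [hJmdef, ← Matrix.transpose_mul, symplForm_mul_self hn, Matrix.transpose_neg,
      Matrix.transpose_one]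
  have hJJv : ∀ x : Fin (2*N) → ℝ, Jm *ᵥ (Jm *ᵥ x) = -x := by
    intro x
    rw [Matrix.mulVec_mulVec, hJJ, Matrix.neg_mulVec, Matrix.one_mulVec]
  -- invertibility of Sᵀ
  have hSt' : Sᵀ * symplForm (2*N) * S = symplForm (2*N) := by
    have h := hSt
    unfold IsSymplectic at h
    rwa [Matrix.transpose_transpose] at h
  have hRight : Sᵀ * (symplForm (2*N) * S * (symplForm (2*N))ᵀ) = 1 := by
    calc Sᵀ * (symplForm (2*N) * S * (symplForm (2*N))ᵀ)
        = (Sᵀ * symplForm (2*N) * S) * (symplForm (2*N))ᵀ := by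
          simp only [Matrix.mul_assoc]
      _ = 1 := by rw [hSt', symplForm_mul_transpose hn]
  have hLeft : (symplForm (2*N) * S * (symplForm (2*N))ᵀ) * Sᵀ = 1 :=
    mul_eq_one_comm.mp hRight
  have hStinj : ∀ x : Fin (2*N) → ℝ, Sᵀ *ᵥ x = 0 → x = 0 := by
    intro x hx
    have h3 : (symplForm (2*N) * S * (symplForm (2*N))ᵀ) *ᵥ (Sᵀ *ᵥ x) = x := by
      rw [Matrix.mulVec_mulVec, hLeft, Matrix.one_mulVec]
    rw [hx, Matrix.mulVec_zero] at h3
    exact h3.symm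
  have hdotpos : ∀ x : Fin (2*N) → ℝ, x ≠ 0 → 0 < x ⬝ᵥ (P *ᵥ x) := by
    intro x hx
    have h1 : x ⬝ᵥ (P *ᵥ x) = (Sᵀ *ᵥ x) ⬝ᵥ (Sᵀ *ᵥ x) := by
      rw [hPdef, ← Matrix.mulVec_mulVec, Matrix.dotProduct_mulVec, ← Matrix.mulVec_transpose]
    rw [h1]
    have hy : Sᵀ *ᵥ x ≠ 0 := fun h => hx (hStinj x h)
    obtain ⟨i, hi⟩ := Function.ne_iff.mp hy
    have hi' : (Sᵀ *ᵥ x) i ≠ 0 := by simpa using hi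
    unfold dotProduct
    apply Finset.sum_pos' (fun i _ => mul_self_nonneg _)
    exact ⟨i, Finset.mem_univ i, mul_self_pos.mpr hi'⟩
  -- apply the spectral family lemma
  have hp : (mvE P).IsSymmetric := by
    intro x y
    rw [inner_eq_dot, inner_eq_dot]
    exact hdotP x y
  have hposE : ∀ x : EuclideanSpace ℝ (Fin (2*N)), x ≠ 0 → (0:ℝ) < inner ℝ x (mvE P x) := by
    intro x hx
    rw [inner_eq_dot]
    exact hdotpos x (fun h => hx (by ext i; exact congrFun h i))
  have hjE : ∀ x y : EuclideanSpace ℝ (Fin (2*N)),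
      (inner ℝ (mvE Jm x) y : ℝ) = -inner ℝ x (mvE Jm y) := by
    intro x y
    rw [inner_eq_dot, inner_eq_dot]
    exact hdotJ x y
  have hjjE : ∀ x : EuclideanSpace ℝ (Fin (2*N)), mvE Jm (mvE Jm x) = -x := fun x => by ext i; exact congrFun (hJJv x) i
  have hpjpE : ∀ x : EuclideanSpace ℝ (Fin (2*N)), mvE P (mvE Jm (mvE P x)) = mvE Jm x := by
    intro x
    show WithLp.toLp 2 (P *ᵥ (Jm *ᵥ (P *ᵥ x))) = WithLp.toLp 2 (Jm *ᵥ x)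
    rw [Matrix.mulVec_mulVec, Matrix.mulVec_mulVec, hPJP]
  have hWtop : Module.finrank ℝ (⊤ : Submodule ℝ (EuclideanSpace ℝ (Fin (2*N)))) = 2*N := by
    rw [finrank_top, finrank_euclideanSpace_fin]
  obtain ⟨v, lam, _, hlam, heig, hvv, hvjv⟩ :=
    euler_family (mvE P) (mvE Jm) hp hposE hjE hjjE hpjpE N ⊤
      (fun x _ => Submodule.mem_top) (fun x _ => Submodule.mem_top) hWtop
  have heigv : ∀ a, P *ᵥ v a = lam a • v a := fun a => congrArg WithLp.ofLp (heig a)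
  have heigj : ∀ a, P *ᵥ (Jm *ᵥ v a) = (lam a)⁻¹ • (Jm *ᵥ v a) := by
    intro a
    have h0 := hpjpE (v a)
    rw [heig a, LinearMap.map_smul, LinearMap.map_smul] at h0
    have h1 : mvE P (mvE Jm (v a)) = (lam a)⁻¹ • mvE Jm (v a) := by
      calc mvE P (mvE Jm (v a))
          = (lam a)⁻¹ • (lam a • mvE P (mvE Jm (v a))) := by
            rw [smul_smul, inv_mul_cancel₀ (hlam a).ne', one_smul]
        _ = (lam a)⁻¹ • mvE Jm (v a) := by rw [h0]
    exact congrArg WithLp.ofLp h1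
  have hvvd : ∀ a b, v a ⬝ᵥ v b = if a = b then (1:ℝ) else 0 := by
    intro a b
    rw [← inner_eq_dot]
    exact hvv a b
  have hvjvd : ∀ a b, v a ⬝ᵥ (Jm *ᵥ v b) = 0 := by
    intro a b
    rw [← inner_eq_dot]
    exact hvjv a b
  have hjvvd : ∀ a b, (Jm *ᵥ v a) ⬝ᵥ v b = 0 := by
    intro a b
    rw [dotProduct_comm]
    exact hvjvd b a
  have hjvjvd : ∀ a b, (Jm *ᵥ v a) ⬝ᵥ (Jm *ᵥ v b) = if a = b then (1:ℝ) else 0 := by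
    intro a b
    have h0 := hdotJ (v a) (Jm *ᵥ v b)
    rw [hJJv, dotProduct_neg, neg_neg] at h0
    rw [h0]
    exact hvvd a b
  -- the orthogonal symplectic matrix O
  set idx : Fin (2*N) → Fin N := fun m => ⟨(m:ℕ)/2, by have := m.isLt; omega⟩ with hidxdef
  set c : Fin (2*N) → (Fin (2*N) → ℝ) :=
    fun m => if (m:ℕ) % 2 = 0 then v (idx m) else Jm *ᵥ v (idx m) with hcdef
  have hceven : ∀ m : Fin (2*N), (m:ℕ)%2 = 0 → c m = v (idx m) := by
    intro m h
    rw [hcdef]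
    simp only [if_pos h]
  have hcodd : ∀ m : Fin (2*N), (m:ℕ)%2 = 1 → c m = Jm *ᵥ v (idx m) := by
    intro m h
    rw [hcdef]
    simp only []
    rw [if_neg (by omega)]
  set O : Matrix (Fin (2*N)) (Fin (2*N)) ℝ := Matrix.of (fun i m => c m i) with hOdef
  have hOapply : ∀ i m, O i m = c m i := fun i m => rfl
  have hOdot : ∀ m m', (Oᵀ * O) m m' = c m ⬝ᵥ c m' := by
    intro m m'
    rw [Matrix.mul_apply]
    simp only [Matrix.transpose_apply, hOapply]
    rfl
  have hOcol : ∀ (M : Matrix (Fin (2*N)) (Fin (2*N)) ℝ) m m',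
      (Oᵀ * (M * O)) m m' = c m ⬝ᵥ (M *ᵥ c m') := by
    intro M m m'
    rw [Matrix.mul_apply]
    simp only [Matrix.transpose_apply]
    unfold dotProduct
    refine Finset.sum_congr rfl fun i _ => ?_
    rw [Matrix.mul_apply, hOapply]
    congr 1
  have hidxeq : ∀ m m' : Fin (2*N), (m:ℕ)/2 = (m':ℕ)/2 → idx m = idx m' := by
    intro m m' h
    rw [hidxdef]
    exact Fin.ext h
  have hidxne : ∀ m m' : Fin (2*N), (m:ℕ)/2 ≠ (m':ℕ)/2 → idx m ≠ idx m' := by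
    intro m m' h he
    exact h (congrArg Fin.val he)
  have hOO : Oᵀ * O = 1 := by
    ext m m'
    rw [hOdot m m']
    rcases Nat.even_or_odd (m:ℕ) with hm | hm
    · have hm2 : (m:ℕ)%2 = 0 := Nat.even_iff.mp hm
      rcases Nat.even_or_odd (m':ℕ) with hm' | hm'
      · have hm'2 : (m':ℕ)%2 = 0 := Nat.even_iff.mp hm'
        rw [hceven m hm2, hceven m' hm'2, hvvd]
        by_cases h : m = m'
        · subst h; simp
        · have hne : (m:ℕ)/2 ≠ (m':ℕ)/2 := by
            intro he
            exact h (Fin.ext (by omega))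
          rw [if_neg (hidxne _ _ hne), Matrix.one_apply_ne h]
      · have hm'2 : (m':ℕ)%2 = 1 := Nat.odd_iff.mp hm'
        rw [hceven m hm2, hcodd m' hm'2, hvjvd,
          Matrix.one_apply_ne (fun h => by subst h; omega)]
    · have hm2 : (m:ℕ)%2 = 1 := Nat.odd_iff.mp hm
      rcases Nat.even_or_odd (m':ℕ) with hm' | hm'
      · have hm'2 : (m':ℕ)%2 = 0 := Nat.even_iff.mp hm'
        rw [hcodd m hm2, hceven m' hm'2, hjvvd,
          Matrix.one_apply_ne (fun h => by subst h; omega)]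
      · have hm'2 : (m':ℕ)%2 = 1 := Nat.odd_iff.mp hm'
        rw [hcodd m hm2, hcodd m' hm'2, hjvjvd]
        by_cases h : m = m'
        · subst h; simp
        · have hne : (m:ℕ)/2 ≠ (m':ℕ)/2 := by
            intro he
            exact h (Fin.ext (by omega))
          rw [if_neg (hidxne _ _ hne), Matrix.one_apply_ne h]
  have hOsymp : Oᵀ * (symplForm (2*N) * O) = symplForm (2*N) := by
    ext m m'
    rw [hOcol]
    rw [show symplForm (2*N) *ᵥ c m' = -(Jm *ᵥ c m') from by rw [hσJ, Matrix.neg_mulVec]]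
    rw [dotProduct_neg]
    rcases Nat.even_or_odd (m:ℕ) with hm | hm
    · have hm2 : (m:ℕ)%2 = 0 := Nat.even_iff.mp hm
      rcases Nat.even_or_odd (m':ℕ) with hm' | hm'
      · have hm'2 : (m':ℕ)%2 = 0 := Nat.even_iff.mp hm'
        rw [hceven m hm2, hceven m' hm'2, hvjvd, neg_zero, symplForm_apply,
          if_neg (by omega), if_neg (by omega)]
      · have hm'2 : (m':ℕ)%2 = 1 := Nat.odd_iff.mp hm'
        rw [hceven m hm2, hcodd m' hm'2, hJJv, dotProduct_neg, neg_neg, hvvd,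
          symplForm_apply]
        rw [if_neg (by omega : ¬((m':ℕ) + 1 = (m:ℕ) ∧ (m':ℕ) % 2 = 0))]
        by_cases h : (m:ℕ) + 1 = (m':ℕ)
        · rw [if_pos (hidxeq m m' (by omega)),
            if_pos (show (m:ℕ) + 1 = (m':ℕ) ∧ (m:ℕ)%2 = 0 from ⟨h, hm2⟩)]
        · rw [if_neg (hidxne m m' (by omega)),
            if_neg (show ¬((m:ℕ) + 1 = (m':ℕ) ∧ (m:ℕ)%2 = 0) by omega)]
    · have hm2 : (m:ℕ)%2 = 1 := Nat.odd_iff.mp hm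
      rcases Nat.even_or_odd (m':ℕ) with hm' | hm'
      · have hm'2 : (m':ℕ)%2 = 0 := Nat.even_iff.mp hm'
        rw [hcodd m hm2, hceven m' hm'2, hjvjvd, symplForm_apply,
          if_neg (by omega : ¬((m:ℕ) + 1 = (m':ℕ) ∧ (m:ℕ) % 2 = 0))]
        by_cases h : (m':ℕ) + 1 = (m:ℕ)
        · rw [if_pos (hidxeq m m' (by omega)),
            if_pos (show (m':ℕ) + 1 = (m:ℕ) ∧ (m':ℕ)%2 = 0 from ⟨h, hm'2⟩)]
        · rw [if_neg (hidxne m m' (by omega)),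
            if_neg (show ¬((m':ℕ) + 1 = (m:ℕ) ∧ (m':ℕ)%2 = 0) by omega)]
          norm_num
      · have hm'2 : (m':ℕ)%2 = 1 := Nat.odd_iff.mp hm'
        rw [hcodd m hm2, hcodd m' hm'2, hJJv, dotProduct_neg, neg_neg, hjvvd,
          symplForm_apply, if_neg (by omega), if_neg (by omega)]
  -- eigen-decomposition of P via O
  have hPO : P * O = O * eulerDiag lam := by
    ext i m
    have hL : (P * O) i m = (P *ᵥ c m) i := by
      rw [Matrix.mul_apply]
      simp only [hOapply]
      rfl
    have hR : (O * eulerDiag lam) i m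
        = c m i * (if (m:ℕ)%2 = 0 then lam (idx m) else (lam (idx m))⁻¹) := by
      unfold eulerDiag
      rw [Matrix.mul_diagonal, hOapply]
    rw [hL, hR]
    rcases Nat.even_or_odd (m:ℕ) with hm | hm
    · have hm2 : (m:ℕ)%2 = 0 := Nat.even_iff.mp hm
      rw [hceven m hm2, heigv, if_pos hm2, Pi.smul_apply, smul_eq_mul, mul_comm]
    · have hm2 : (m:ℕ)%2 = 1 := Nat.odd_iff.mp hm
      rw [hcodd m hm2, heigj, if_neg (by omega), Pi.smul_apply, smul_eq_mul, mul_comm]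
  -- assemble
  have hOOT : O * Oᵀ = 1 := mul_eq_one_comm.mp hOO
  have hPOOT : P = O * eulerDiag lam * Oᵀ := by
    calc P = P * (O * Oᵀ) := by rw [hOOT, Matrix.mul_one]
      _ = (P * O) * Oᵀ := by rw [← Matrix.mul_assoc]
      _ = O * eulerDiag lam * Oᵀ := by rw [hPO]
  have hOsymT : IsSymplectic Oᵀ := by
    show Oᵀ * symplForm (2*N) * Oᵀᵀ = symplForm (2*N)
    rw [Matrix.transpose_transpose, Matrix.mul_assoc]
    exact hOsymp
  have hOsym : IsSymplectic O := by
    have h := hOsymT.transpose hn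
    rwa [Matrix.transpose_transpose] at h
  set d : Fin N → ℝ := fun a => Real.sqrt (lam a) with hddef
  have hd0 : ∀ a, 0 < d a := fun a => Real.sqrt_pos.mpr (hlam a)
  set D := eulerDiag d with hDdef
  set Dinv := eulerDiag (fun a => (d a)⁻¹) with hDinvdef
  have hDD : D * Dinv = 1 := by
    rw [hDdef, hDinvdef, eulerDiag_mul,
      show (fun i => d i * (d i)⁻¹) = fun _ : Fin N => (1:ℝ) from
        funext fun i => mul_inv_cancel₀ (hd0 i).ne']
    exact eulerDiag_one
  have hDinvD : Dinv * D = 1 := mul_eq_one_comm.mp hDD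
  have hDsq : D * D = eulerDiag lam := by
    rw [hDdef, eulerDiag_mul]
    exact congrArg eulerDiag (funext fun a => Real.mul_self_sqrt (hlam a).le)
  have hDinvT : Dinvᵀ = Dinv := by rw [hDinvdef, eulerDiag_transpose]
  have hU₂sym : IsSymplectic (Dinv * Oᵀ * S) :=
    ((eulerDiag_symplectic _ (fun a => inv_ne_zero (hd0 a).ne')).mul hOsymT).mul hS
  have hMid : Oᵀ * P * O = eulerDiag lam := by
    calc Oᵀ * P * O = Oᵀ * (O * eulerDiag lam * Oᵀ) * O := by rw [hPOOT]
      _ = (Oᵀ * O) * (eulerDiag lam * (Oᵀ * O)) := by simp only [Matrix.mul_assoc]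
      _ = eulerDiag lam := by rw [hOO, Matrix.one_mul, Matrix.mul_one]
  have hU₂orth : (Dinv * Oᵀ * S) * (Dinv * Oᵀ * S)ᵀ = 1 := by
    have ht : (Dinv * Oᵀ * S)ᵀ = Sᵀ * (O * Dinv) := by
      rw [Matrix.transpose_mul, Matrix.transpose_mul, Matrix.transpose_transpose, hDinvT]
    rw [ht]
    have h1 : (Dinv * Oᵀ * S) * (Sᵀ * (O * Dinv)) = Dinv * (Oᵀ * P * O) * Dinv := by
      rw [hPdef]
      simp only [Matrix.mul_assoc]
    rw [h1, hMid, ← hDsq]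
    calc Dinv * (D * D) * Dinv = (Dinv * D) * (D * Dinv) := by simp only [Matrix.mul_assoc]
      _ = 1 := by rw [hDD, hDinvD, Matrix.one_mul]
  refine ⟨O, Dinv * Oᵀ * S, d, hOsym, hOOT, hU₂sym, hU₂orth, hd0, ?_⟩
  calc S = (O * Oᵀ) * S := by rw [hOOT, Matrix.one_mul]
    _ = O * (D * Dinv) * Oᵀ * S := by rw [hDD, Matrix.mul_one]
    _ = O * D * (Dinv * Oᵀ * S) := by simp only [Matrix.mul_assoc]
    _ = O * eulerDiag d * (Dinv * Oᵀ * S) := by rw [hDdef]
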